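/- Let H(x,y) = xy and let V : ℝ² → ℝ be smooth and positive near the origin. For the Hamiltonian-type flow with vector field W = (x/V) ∂_x − (y/V) ∂_y, the time T(c,a) to travel along the level set {xy = c} (c > 0 small, a > 0 fixed) from the point (a, c/a) to (c/a, a) equals ∫_a^{c/a} V(x, c/x)/x dx (with orientation giving a positive time), and T(c,a) = −V(0,0) log c + e(c,a) where e is bounded for c in a neighborhood of 0 (for fixed a). -/

import Mathlib

open intervalIntegral MeasureTheory


/-- For `H(x,y) = xy` and a smooth `V` positive near the origin, the
travel time along the level set `{xy = c}` from `(a, c/a)` to `(c/a, a)` is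
`T(c,a) = ∫_{c/a}^{a} V(x, c/x)/x dx` (positive orientation), and
`T(c,a) = −V(0,0)·log c + e(c,a)` with `e` bounded for `c` in a neighborhood of `0`
(for fixed `a > 0`). -/
theorem stmt16 (V : ℝ × ℝ → ℝ) (hV : ContDiff ℝ (⊤ : ℕ∞) V)
    (hVpos : ∃ ε > 0, ∀ p : ℝ × ℝ, ‖p‖ < ε → 0 < V p)
    (a : ℝ) (ha : 0 < a) :
    ∃ δ > 0, ∃ M : ℝ, ∀ c ∈ Set.Ioo (0:ℝ) δ,
      |(∫ x in (c / a)..a, V (x, c / x) / x) - (-(V (0, 0)) * Real.log c)| ≤ M := by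
  -- Lipschitz-type bound on the closed ball of radius a
  obtain ⟨C, hC⟩ := (isCompact_closedBall (0 : ℝ × ℝ) a).exists_bound_of_continuousOn
    ((hV.continuous_fderiv (by simp)).continuousOn)
  set L := max C 0 with hLdef
  have hL0 : (0 : ℝ) ≤ L := le_max_right _ _
  have key : ∀ p ∈ Metric.closedBall (0 : ℝ × ℝ) a, |V p - V (0, 0)| ≤ L * ‖p‖ := by
    intro p hp
    have h0 : (0 : ℝ × ℝ) ∈ Metric.closedBall (0 : ℝ × ℝ) a :=
      Metric.mem_closedBall_self ha.le
    have := (convex_closedBall (0 : ℝ × ℝ) a).norm_image_sub_le_of_norm_fderiv_le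
      (fun x _ => (hV.differentiable (by simp)) x)
      (fun x hx => (hC x hx).trans (le_max_left C 0)) h0 hp
    rw [sub_zero, Real.norm_eq_abs] at this
    exact this
  refine ⟨a ^ 2, by positivity, 2 * |V (0, 0) * Real.log a| + 2 * L * a, ?_⟩
  rintro c ⟨hc0, hca⟩
  set u := c / a with hudef
  have hu0 : 0 < u := div_pos hc0 ha
  have hua : u ≤ a := by
    rw [hudef, div_le_iff₀ ha]
    calc c ≤ a ^ 2 := hca.le
    _ = a * a := sq a
  have h0mem : (0 : ℝ) ∉ Set.uIcc u a := by
    rw [Set.uIcc_of_le hua]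
    intro h
    exact absurd h.1 (not_le.mpr hu0)
  have hx0 : ∀ x ∈ Set.uIcc u a, x ≠ 0 := fun x hx h => h0mem (h ▸ hx)
  -- continuity
  have hcontV : ContinuousOn (fun x : ℝ => V (x, c / x)) (Set.uIcc u a) := by
    apply hV.continuous.comp_continuousOn
    exact continuousOn_id.prodMk (continuousOn_const.div continuousOn_id hx0)
  have hint_g : IntervalIntegrable (fun x => (V (x, c / x) - V (0, 0)) / x)
      volume u a :=
    ((hcontV.sub continuousOn_const).div continuousOn_id hx0).intervalIntegrable
  have hint_inv : IntervalIntegrable (fun x => V (0, 0) * (1 / x)) volume u a :=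
    (continuousOn_const.mul (continuousOn_const.div continuousOn_id hx0)).intervalIntegrable
  -- decompose the integral
  have hsplit : (∫ x in u..a, V (x, c / x) / x)
      = (∫ x in u..a, V (0, 0) * (1 / x)) + ∫ x in u..a, (V (x, c / x) - V (0, 0)) / x := by
    rw [← intervalIntegral.integral_add hint_inv hint_g]
    apply intervalIntegral.integral_congr
    intro x hx
    have := hx0 x hx
    field_simp
    ring
  have hinv : (∫ x in u..a, V (0, 0) * (1 / x)) = V (0, 0) * (2 * Real.log a - Real.log c) := by
    rw [intervalIntegral.integral_const_mul, integral_one_div h0mem, hudef]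
    rw [div_div_eq_mul_div, Real.log_div (by positivity) (ne_of_gt hc0),
      Real.log_mul (ne_of_gt ha) (ne_of_gt ha)]
    ring
  -- pointwise bound on the remainder
  have hbound : ∀ t ∈ Set.uIoc u a,
      ‖(V (t, c / t) - V (0, 0)) / t‖ ≤ L + L * c * t ^ (-2 : ℤ) := by
    intro t ht
    rw [Set.uIoc_of_le hua] at ht
    have ht0 : 0 < t := lt_trans hu0 ht.1
    have hta : t ≤ a := ht.2
    have hct0 : 0 < c / t := div_pos hc0 ht0
    have hcta : c / t ≤ a := by
      rw [div_le_iff₀ ht0]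
      have hcu : c = u * a := by rw [hudef]; field_simp
      nlinarith [ht.1]
    have hmem : ((t, c / t) : ℝ × ℝ) ∈ Metric.closedBall (0 : ℝ × ℝ) a := by
      rw [Metric.mem_closedBall, dist_zero_right, Prod.norm_def]
      simp only [Real.norm_eq_abs, abs_of_pos ht0, abs_of_pos hct0]
      exact max_le hta hcta
    have h1 : |V (t, c / t) - V (0, 0)| ≤ L * (t + c / t) := by
      refine (key _ hmem).trans ?_
      apply mul_le_mul_of_nonneg_left _ hL0
      rw [Prod.norm_def]
      simp only [Real.norm_eq_abs, abs_of_pos ht0, abs_of_pos hct0]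
      exact max_le (by linarith) (by linarith)
    rw [Real.norm_eq_abs, abs_div, abs_of_pos ht0]
    have h2 : |V (t, c / t) - V (0, 0)| / t ≤ L * (t + c / t) / t := by gcongr
    refine h2.trans_eq ?_
    have hz : t ^ (-2 : ℤ) = (t ^ (2:ℕ))⁻¹ := by
      rw [zpow_neg, show ((2:ℤ)) = ((2:ℕ):ℤ) from rfl, zpow_natCast]
    rw [hz]
    field_simp
    all_goals ring
  -- integral of the bound
  have hint_b : IntervalIntegrable (fun x : ℝ => L + L * c * x ^ (-2 : ℤ)) volume u a :=
    intervalIntegrable_const.add ((intervalIntegrable_zpow (Or.inr h0mem)).const_mul _)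
  have hval : (∫ x in u..a, (L + L * c * x ^ (-2 : ℤ)))
      = L * (a - u) + L * c * (u⁻¹ - a⁻¹) := by
    rw [intervalIntegral.integral_add intervalIntegrable_const
      ((intervalIntegrable_zpow (Or.inr h0mem)).const_mul _),
      intervalIntegral.integral_const, intervalIntegral.integral_const_mul,
      integral_zpow (Or.inr ⟨by decide, h0mem⟩)]
    norm_num
    ring
  have hcu : c * u⁻¹ = a := by
    rw [hudef]
    field_simp
  have h1 : c * a⁻¹ ≤ c * u⁻¹ :=
    mul_le_mul_of_nonneg_left (inv_anti₀ hu0 hua) hc0.le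
  have h2 : (0:ℝ) ≤ c * a⁻¹ := by positivity
  have e1 : L * (c * u⁻¹) = L * a := by rw [hcu]
  have hpos : 0 ≤ L * (a - u) + L * c * (u⁻¹ - a⁻¹) := by
    nlinarith [mul_nonneg hL0 (sub_nonneg.mpr hua), mul_nonneg hL0 (sub_nonneg.mpr h1)]
  have hle : L * (a - u) + L * c * (u⁻¹ - a⁻¹) ≤ 2 * L * a := by
    have h3 : L * (a - u) ≤ L * a := mul_le_mul_of_nonneg_left (by linarith) hL0
    have h4 : L * (c * u⁻¹ - c * a⁻¹) ≤ L * (c * u⁻¹) :=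
      mul_le_mul_of_nonneg_left (by linarith) hL0
    nlinarith [h3, h4, e1]
  have habs : |∫ x in u..a, (V (x, c / x) - V (0, 0)) / x| ≤ 2 * L * a := by
    have := intervalIntegral.norm_integral_le_of_norm_le
      (f := fun x => (V (x, c / x) - V (0, 0)) / x)
      (μ := volume) (a := u) (b := a)
      hua (Filter.Eventually.of_forall (fun t ht => hbound t (by rw [Set.uIoc_of_le hua]; exact ht))) hint_b
    rw [Real.norm_eq_abs] at this
    refine this.trans ?_
    rw [hval]
    exact hle
  -- assemble
  rw [hsplit, hinv]
  have heq : V (0, 0) * (2 * Real.log a - Real.log c)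
      + (∫ x in u..a, (V (x, c / x) - V (0, 0)) / x) - -V (0, 0) * Real.log c
      = 2 * (V (0, 0) * Real.log a) + ∫ x in u..a, (V (x, c / x) - V (0, 0)) / x := by
    ring
  rw [heq]
  calc |2 * (V (0, 0) * Real.log a) + ∫ x in u..a, (V (x, c / x) - V (0, 0)) / x|
      ≤ |2 * (V (0, 0) * Real.log a)| + |∫ x in u..a, (V (x, c / x) - V (0, 0)) / x| :=
        abs_add_le _ _
    _ ≤ 2 * |V (0, 0) * Real.log a| + 2 * L * a := by
        rw [abs_mul]
        norm_num
        exact habs
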